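/- In the graph B'_q, for every a in F_q ∪ {q} and every c in F_q, any two distinct vertices in the set {(a,t,c)_1 : t in F_q} are at distance at least 6. -/
import Mathlib
set_option maxHeartbeats 1600000


/-- The bipartite graph `B'_q`: points are `F³` (`Sum.inl`); lines are either ordinary
lines `(a,b,c)₁` with `a,b,c ∈ F` (`Sum.inr (Sum.inl _)`) or the added lines `(q,b,c)₁`
(`Sum.inr (Sum.inr (b,c))`).  The line `(a,b,c)₁` is adjacent to the points
`(j, a*j+b, a²*j+2ab+c)₀` for `j ∈ F`, and `(q,b,c)₁` is adjacent to `(c,b,j)₀` for `j ∈ F`. -/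
def Bq' (F : Type*) [Field F] :
    SimpleGraph ((F × F × F) ⊕ ((F × F × F) ⊕ (F × F))) :=
  SimpleGraph.fromRel (fun u v =>
    match u, v with
    | Sum.inl (j, y, z), Sum.inr (Sum.inl (a, b, c)) =>
        y = a * j + b ∧ z = a ^ 2 * j + 2 * a * b + c
    | Sum.inl (x, y, _), Sum.inr (Sum.inr (b, c)) => x = c ∧ y = b
    | _, _ => False)

/-- The line `(a,t,c)₁` of `B'_q`, where the first coordinate `a` ranges over
`F ∪ {q}` (`some a` for `a ∈ F`, and `none` for the extra symbol `q`). -/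
def mkLine {F : Type*} : Option F → F → F → (F × F × F) ⊕ ((F × F × F) ⊕ (F × F))
  | some a, t, c => Sum.inr (Sum.inl (a, t, c))
  | none, t, c => Sum.inr (Sum.inr (t, c))

/-- In `B'_q`, for every `a ∈ F ∪ {q}` and `c ∈ F`, two distinct lines `(a,t,c)₁` and
`(a,t',c)₁` are at distance at least 6: they have no common neighbour and there is no
walk of length 4 between them. -/
theorem stmt9 {F : Type*} [Field F] (a : Option F) (c t t' : F) (h : t ≠ t') :
    (∀ w, ¬ ((Bq' F).Adj (mkLine a t c) w ∧ (Bq' F).Adj (mkLine a t' c) w)) ∧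
    ¬ ∃ w₁ w₂ w₃, (Bq' F).Adj (mkLine a t c) w₁ ∧ (Bq' F).Adj w₁ w₂ ∧
        (Bq' F).Adj w₂ w₃ ∧ (Bq' F).Adj w₃ (mkLine a t' c) := by
  constructor
  · rintro w ⟨h1, h2⟩
    rcases a with _ | a <;>
      rcases w with ⟨j, y, z⟩ | ⟨α, β, γ⟩ | ⟨β, γ⟩ <;>
      simp [Bq', mkLine, SimpleGraph.fromRel_adj] at h1 h2
    · exact h (by linear_combination h2.2 - h1.2)
    · exact h (by linear_combination h2.1 - h1.1)
  · rintro ⟨w₁, w₂, w₃, h1, h2, h3, h4⟩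
    rcases a with _ | a <;>
      rcases w₁ with ⟨j, y, z⟩ | ⟨α₁, β₁, γ₁⟩ | ⟨β₁, γ₁⟩ <;>
      rcases w₂ with ⟨j₂, y₂, z₂⟩ | ⟨α₂, β₂, γ₂⟩ | ⟨β₂, γ₂⟩ <;>
      rcases w₃ with ⟨j₃, y₃, z₃⟩ | ⟨α₃, β₃, γ₃⟩ | ⟨β₃, γ₃⟩ <;>
      simp [Bq', mkLine, SimpleGraph.fromRel_adj] at h1 h2 h3 h4
    -- a = q, middle line ordinary
    · exact h (by linear_combination α₂ * h1.1 - h1.2 + h2.1 - h3.1 - α₂ * h4.1 + h4.2)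
    -- a = q, middle line extra
    · exact h (by linear_combination -h1.2 + h2.2 - h3.2 + h4.2)
    -- a ∈ F, middle line ordinary
    · have key : (t - t') ^ 2 = 0 := by
        linear_combination (t - t' + (a + α₂) * (j - j₃)) * (h2.1 - h1.1 - h3.1 + h4.1)
          - (j - j₃) * (h2.2 - h1.2 - h3.2 + h4.2)
      exact h (sub_eq_zero.mp (pow_eq_zero_iff (two_ne_zero) |>.mp key))
    -- a ∈ F, middle line extra
    · exact h (by linear_combination -h1.1 + h4.1 + h2.2 - h3.2 - a * (h2.1 - h3.1))
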